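/- arXiv:1501.02029 — 3 statements merged into one kernel-verified Lean document; each statement's English description precedes it below -/
import Mathlib

section
/- Let ṽ : [t₀, ∞) × ℝ → ℝ be continuous, bounded in space, continuously differentiable in t, negative everywhere, and satisfy ṽ_t ≤ J ∗ ṽ where J is a nonnegative integrable kernel with ∫_ℝ J = 1. Then for every T > 0 and every natural number N ≥ 1, ṽ(t₀ + N·T, x) < T^N · [J^{∗N} ∗ ṽ(t₀, ·)](x) for all x ∈ ℝ, where J^{∗N} denotes the N-fold convolution of J with itself. -/
/-!
Since `∂ₜv ≤ J ⋆ v ≤ 0`, each `v(·, x)` is nonincreasing in time, so on `[t, t + T]` the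
derivative is bounded by `(J ⋆ v(t))(x)` and the mean value theorem together with `v(t) < 0` gives
`v(t + T) < T • J ⋆ v(t)`. Iterating this with the kernel `T • J`, using that convolution with a
nonnegative kernel is monotone and that convolution is associative on integrable kernels acting on
bounded continuous functions, yields `v(t₀ + N T) < (T • J)^{⋆N} ⋆ v(t₀) = T^N J^{⋆N} ⋆ v(t₀)`.
-/

open Real MeasureTheory Filter

/-- `convPow J n` is the `(n+1)`-fold convolution power of `J`,
so that `convPow J 0 = J` corresponds to `J^{∗1}` and
`convPow J (N-1)` corresponds to `J^{∗N}`. -/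
noncomputable def convPow (J : ℝ → ℝ) : ℕ → ℝ → ℝ
  | 0 => J
  | n + 1 => fun x => ∫ y, J (x - y) * convPow J n y

open Set
open scoped Convolution

section BoundedConvolution

variable {E E' F : Type*} [NormedAddCommGroup E] [NormedAddCommGroup E'] [NormedAddCommGroup F]
  [NormedSpace ℝ E] [NormedSpace ℝ E'] [NormedSpace ℝ F]
  (L : E →L[ℝ] E' →L[ℝ] F) {f : ℝ → E} {g : ℝ → E'}

theorem MeasureTheory.Integrable.convolutionExistsAt_of_bddAbove (hf : Integrable f)
    (hg : AEStronglyMeasurable g) (hbg : BddAbove (range fun y => ‖g y‖)) (x : ℝ) :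
    ConvolutionExistsAt f g x L :=
  BddAbove.convolutionExistsAt L (hbg.mono (image_subset_range _ _)) MeasurableSet.univ
    (subset_univ _) hf.integrableOn hg

theorem MeasureTheory.Integrable.bddAbove_norm_convolution (hf : Integrable f)
    (hbg : BddAbove (range fun y => ‖g y‖)) :
    BddAbove (range fun x => ‖(f ⋆[L] g) x‖) := by
  obtain ⟨C, hC⟩ := hbg
  refine ⟨‖L‖ * (∫ t, ‖f t‖) * C, ?_⟩
  rintro - ⟨x, rfl⟩
  dsimp only
  rw [convolution_def, ← integral_const_mul, ← integral_mul_const]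
  refine norm_integral_le_of_norm_le ((hf.norm.const_mul _).mul_const _) (.of_forall fun t => ?_)
  exact L.le_of_opNorm₂_le_of_le le_rfl le_rfl (hC (mem_range_self (x - t)))

end BoundedConvolution

theorem convolution_eq_integral (f g : ℝ → ℝ) (x : ℝ) :
    (f ⋆ g) x = ∫ y, f (x - y) * g y :=
  convolution_lsmul_swap

theorem convolution_nonpos {f g : ℝ → ℝ} (hf : ∀ x, 0 ≤ f x) (hg : ∀ x, g x ≤ 0) (x : ℝ) :
    (f ⋆ g) x ≤ 0 := by
  rw [convolution_eq_integral]
  exact integral_nonpos fun y => mul_nonpos_of_nonneg_of_nonpos (hf _) (hg _)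

theorem convolution_assoc_of_bddAbove {f g h : ℝ → ℝ} (hf : Integrable f) (hg : Integrable g)
    (hh : Continuous h) (hbh : BddAbove (range fun y => ‖h y‖)) (x : ℝ) :
    ((f ⋆ g) ⋆ h) x = (f ⋆ (g ⋆ h)) x := by
  have hbh' : BddAbove (range fun y => ‖‖h y‖‖) := by simpa only [norm_norm] using hbh
  refine convolution_assoc _ _ _ _ (fun a b c => smul_assoc a b c) hf.aestronglyMeasurable
    hg.aestronglyMeasurable hh.aestronglyMeasurable (hf.ae_convolution_exists _ hg)
    (.of_forall (hg.norm.convolutionExistsAt_of_bddAbove _ hh.norm.aestronglyMeasurable hbh'))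
    (hf.norm.convolutionExistsAt_of_bddAbove _ ?_ (hg.norm.bddAbove_norm_convolution _ hbh') x)
  exact (hbh'.continuous_convolution_right_of_integrable _ hg.norm hh.norm).aestronglyMeasurable

theorem convPow_succ (J : ℝ → ℝ) (n : ℕ) : convPow J (n + 1) = J ⋆ convPow J n :=
  funext fun x => (convolution_eq_integral _ _ x).symm

theorem integrable_convPow {J : ℝ → ℝ} (hJ : Integrable J) (n : ℕ) : Integrable (convPow J n) := by
  induction n with
  | zero => exact hJ
  | succ n ih => rw [convPow_succ]; exact hJ.integrable_convolution _ ih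

theorem convPow_smul (c : ℝ) (J : ℝ → ℝ) (n : ℕ) :
    convPow (c • J) n = c ^ (n + 1) • convPow J n := by
  induction n with
  | zero => simp [convPow]
  | succ n ih => rw [convPow_succ, convPow_succ, ih, smul_convolution, convolution_smul, smul_smul,
      ← pow_succ']

section Evolution

variable {J : ℝ → ℝ} {v vt : ℝ → ℝ → ℝ} {t₀ : ℝ}

theorem antitoneOn_of_hasDerivAt_le_convolution (hJ : ∀ x, 0 ≤ J x)
    (hderiv : ∀ x t, t₀ ≤ t → HasDerivAt (fun s => v s x) (vt t x) t)
    (hnonpos : ∀ t x, t₀ ≤ t → v t x ≤ 0) (hineq : ∀ t x, t₀ ≤ t → vt t x ≤ (J ⋆ v t) x)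
    (x : ℝ) : AntitoneOn (fun t => v t x) (Ici t₀) := by
  refine antitoneOn_of_hasDerivWithinAt_nonpos (convex_Ici t₀)
    (fun t ht => (hderiv x t ht).continuousAt.continuousWithinAt)
    (fun t ht => (hderiv x t (interior_subset ht)).hasDerivWithinAt) fun t ht => ?_
  have ht : t₀ ≤ t := interior_subset ht
  exact (hineq t x ht).trans (convolution_nonpos hJ (fun y => hnonpos t y ht) x)

theorem lt_mul_convolution_of_hasDerivAt_le_convolution (hJ : ∀ x, 0 ≤ J x)
    (hJint : Integrable J) (hcont : ∀ t, Continuous (v t))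
    (hbdd : ∀ t, BddAbove (range fun x => ‖v t x‖))
    (hderiv : ∀ x t, t₀ ≤ t → HasDerivAt (fun s => v s x) (vt t x) t)
    (hneg : ∀ t x, t₀ ≤ t → v t x < 0) (hineq : ∀ t x, t₀ ≤ t → vt t x ≤ (J ⋆ v t) x)
    {T : ℝ} (hT : 0 ≤ T) {t : ℝ} (ht : t₀ ≤ t) (x : ℝ) :
    v (t + T) x < T * (J ⋆ v t) x := by
  have hanti := antitoneOn_of_hasDerivAt_le_convolution hJ hderiv
    (fun t x ht => (hneg t x ht).le) hineq
  have hvt_le : ∀ s ∈ Icc t (t + T), vt s x ≤ (J ⋆ v t) x := fun s hs =>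
    (hineq s x (ht.trans hs.1)).trans <| convolution_mono_right
      (hJint.convolutionExistsAt_of_bddAbove _ (hcont s).aestronglyMeasurable (hbdd s) x)
      (hJint.convolutionExistsAt_of_bddAbove _ (hcont t).aestronglyMeasurable (hbdd t) x)
      hJ fun y => hanti y ht (ht.trans hs.1) hs.1
  have hdt : ∀ s ∈ Icc t (t + T), HasDerivAt (fun s => v s x) (vt s x) s := fun s hs =>
    hderiv x s (ht.trans hs.1)
  have hmvt := (convex_Icc t (t + T)).image_sub_le_mul_sub_of_deriv_le
    (fun s hs => (hdt s hs).continuousAt.continuousWithinAt)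
    (fun s hs => (hdt s (interior_subset hs)).differentiableAt.differentiableWithinAt)
    (fun s hs => (hdt s (interior_subset hs)).deriv ▸ hvt_le s (interior_subset hs))
    t (left_mem_Icc.2 (by linarith)) (t + T) (right_mem_Icc.2 (by linarith)) (by linarith)
  rw [add_sub_cancel_left] at hmvt
  linarith [hneg t x ht]

end Evolution

theorem lt_convPow_convolution_of_lt_convolution {K : ℝ → ℝ} {u : ℝ → ℝ → ℝ} {t₀ T : ℝ}
    (hK : ∀ x, 0 ≤ K x) (hKint : Integrable K) (hcont : ∀ t, Continuous (u t))
    (hbdd : ∀ t, BddAbove (range fun x => ‖u t x‖)) (hT : 0 ≤ T)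
    (hstep : ∀ t, t₀ ≤ t → ∀ x, u (t + T) x < (K ⋆ u t) x) (n : ℕ) {t : ℝ} (ht : t₀ ≤ t)
    (x : ℝ) : u (t + (n + 1) * T) x < (convPow K n ⋆ u t) x := by
  induction n generalizing x with
  | zero => simpa [convPow] using hstep t ht x
  | succ n ih =>
    have hs : t₀ ≤ t + (n + 1) * T := le_add_of_le_of_nonneg ht (by positivity)
    have hKn := integrable_convPow hKint n
    calc u (t + ((n + 1 : ℕ) + 1) * T) x = u (t + (n + 1) * T + T) x := by push_cast; ring_nf
      _ < (K ⋆ u (t + (n + 1) * T)) x := hstep _ hs x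
      _ ≤ (K ⋆ (convPow K n ⋆ u t)) x := by
        have hcont' : Continuous (convPow K n ⋆ u t) :=
          (hbdd t).continuous_convolution_right_of_integrable _ hKn (hcont t)
        exact convolution_mono_right
          (hKint.convolutionExistsAt_of_bddAbove _ (hcont _).aestronglyMeasurable (hbdd _) x)
          (hKint.convolutionExistsAt_of_bddAbove _ hcont'.aestronglyMeasurable
            (hKn.bddAbove_norm_convolution _ (hbdd t)) x)
          hK fun y => (ih y).le
      _ = (convPow K (n + 1) ⋆ u t) x := by
        rw [convPow_succ, convolution_assoc_of_bddAbove hKint hKn (hcont t) (hbdd t)]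

theorem stmt5_general (t₀ : ℝ) (J : ℝ → ℝ) (v vt : ℝ → ℝ → ℝ)
    (hJnn : ∀ x, 0 ≤ J x) (hJint : Integrable J)
    (hcont : Continuous fun p : ℝ × ℝ => v p.1 p.2)
    (hbdd : ∀ t, ∃ C, ∀ x, |v t x| ≤ C)
    (hderiv : ∀ x t, t₀ ≤ t → HasDerivAt (fun s => v s x) (vt t x) t)
    (hneg : ∀ t x, t₀ ≤ t → v t x < 0)
    (hineq : ∀ t x, t₀ ≤ t → vt t x ≤ ∫ y, J (x - y) * v t y) :
    ∀ T > 0, ∀ N : ℕ, 1 ≤ N → ∀ x : ℝ,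
      v (t₀ + N * T) x < T ^ N * ∫ y, convPow J (N - 1) (x - y) * v t₀ y := by
  intro T hT N hN x
  obtain ⟨n, rfl⟩ := Nat.exists_eq_add_of_le' hN
  have hvx : ∀ t, Continuous (v t) := fun t => hcont.comp (.prodMk_right t)
  have hbdd' : ∀ t, BddAbove (range fun x => ‖v t x‖) := fun t =>
    let ⟨C, hC⟩ := hbdd t
    ⟨C, by rintro - ⟨x, rfl⟩; exact hC x⟩
  have hstep : ∀ t, t₀ ≤ t → ∀ x, v (t + T) x < ((T • J) ⋆ v t) x := fun t ht x => by
    rw [smul_convolution]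
    exact lt_mul_convolution_of_hasDerivAt_le_convolution hJnn hJint hvx hbdd' hderiv hneg
      (fun t x ht => (hineq t x ht).trans_eq (convolution_eq_integral _ _ x).symm) hT.le ht x
  have key := lt_convPow_convolution_of_lt_convolution (K := T • J)
    (fun x => mul_nonneg hT.le (hJnn x)) (hJint.smul T) hvx hbdd' hT.le hstep n le_rfl x
  rw [convPow_smul, smul_convolution, Pi.smul_apply, convolution_eq_integral, smul_eq_mul] at key
  rwa [Nat.add_sub_cancel, Nat.cast_add_one]

theorem stmt5 (t₀ : ℝ) (J : ℝ → ℝ) (v vt : ℝ → ℝ → ℝ)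
    (hJnn : ∀ x, 0 ≤ J x) (hJint : Integrable J) (hJ1 : (∫ x, J x) = 1)
    (hcont : Continuous fun p : ℝ × ℝ => v p.1 p.2)
    (hbdd : ∀ t, ∃ C, ∀ x, |v t x| ≤ C)
    (hderiv : ∀ x t, t₀ ≤ t → HasDerivAt (fun s => v s x) (vt t x) t)
    (hvtcont : ∀ x, Continuous fun t => vt t x)
    (hneg : ∀ t x, t₀ ≤ t → v t x < 0)
    (hineq : ∀ t x, t₀ ≤ t → vt t x ≤ ∫ y, J (x - y) * v t y) :
    ∀ T > 0, ∀ N : ℕ, 1 ≤ N → ∀ x : ℝ,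
      v (t₀ + N * T) x < T ^ N * ∫ y, convPow J (N - 1) (x - y) * v t₀ y :=
  stmt5_general t₀ J v vt hJnn hJint hcont hbdd hderiv hneg hineq
end

section
/- Let J be an even nonnegative probability density with ∫_ℝ J(x) e^{λx} dx < ∞ for all λ > 0, let c_min > 0, and let Γ_α, M₁ be as above. Then there exists α₀ > 0 such that for every 0 < α ≤ α₀ there is M₂ = M₂(α) > M₁ + 1 with |[J ∗ Γ_α](x) − e^{−α(x−M₁)}| ≤ (α c_min / 4) e^{−α(x−M₁)} for all x ≥ M₂. -/
open Real MeasureTheory Filter Topology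

lemma aux_exp_bound (u : ℝ) : |Real.exp u - 1 - u| ≤ 3 * u ^ 2 * Real.exp |u| := by
  rcases le_or_gt |u| 1 with h | h
  · have h1 := Real.abs_exp_sub_one_sub_id_le h
    have h2 : (1:ℝ) ≤ Real.exp |u| := Real.one_le_exp (abs_nonneg u)
    nlinarith [sq_nonneg u]
  · have h1 : Real.exp u ≤ Real.exp |u| := Real.exp_le_exp.2 (le_abs_self u)
    have h2 : (1:ℝ) ≤ Real.exp |u| := Real.one_le_exp (abs_nonneg u)
    have h3 : |u| ≤ Real.exp |u| := (Real.add_one_le_exp |u|).trans' (by linarith)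
    have h4 : (1:ℝ) ≤ u ^ 2 := by nlinarith [sq_abs u]
    have h5 : |Real.exp u - 1 - u| ≤ Real.exp u + 1 + |u| := by
      have := abs_nonneg u
      have := Real.exp_pos u
      rw [abs_le]; constructor <;> nlinarith [le_abs_self u, neg_abs_le u]
    nlinarith [Real.exp_pos u]

lemma aux_sq_exp (t : ℝ) (ht : 0 ≤ t) : t ^ 2 * Real.exp (t / 2) ≤ 16 * Real.exp t := by
  have h1 : t / 4 + 1 ≤ Real.exp (t / 4) := Real.add_one_le_exp _
  have h2 : Real.exp (t / 4) * Real.exp (t / 4) = Real.exp (t / 2) := by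
    rw [← Real.exp_add]; ring_nf
  have h3 : Real.exp (t / 2) * Real.exp (t / 2) = Real.exp t := by
    rw [← Real.exp_add]; ring_nf
  have h4 := Real.exp_pos (t / 4)
  have h5 := Real.exp_pos (t / 2)
  have h1' : t / 4 ≤ Real.exp (t / 4) := by linarith
  have h6 : t ^ 2 ≤ 16 * Real.exp (t / 2) := by
    nlinarith [mul_le_mul h1' h1' (by linarith : (0:ℝ) ≤ t / 4) h4.le]
  nlinarith [mul_le_mul_of_nonneg_right h6 h5.le]

lemma aux_exp_abs (z : ℝ) : Real.exp |z| ≤ Real.exp z + Real.exp (-z) := by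
  rcases abs_cases z with ⟨h, _⟩ | ⟨h, _⟩ <;> rw [h] <;>
    [linarith [Real.exp_pos (-z)]; linarith [Real.exp_pos z]]

set_option maxHeartbeats 1000000 in
theorem stmt14 (M₁ cmin : ℝ) (J : ℝ → ℝ) (Γ : ℝ → ℝ → ℝ)
    (hM₁ : 0 < M₁) (hcmin : 0 < cmin)
    (hJnn : ∀ x, 0 ≤ J x) (hJeven : ∀ x, J x = J (-x))
    (hJint : Integrable J) (hJ1 : (∫ x, J x) = 1)
    (hJexp : ∀ l : ℝ, 0 < l → Integrable (fun x => J x * Real.exp (l * x)))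
    (hΓ : ∀ α : ℝ, 0 < α →
      ContDiff ℝ (⊤ : ℕ∞) (Γ α) ∧ Antitone (Γ α) ∧ (∀ x, Γ α x ∈ Set.Icc (0 : ℝ) 1) ∧
        (∀ x, x ≤ -M₁ - 1 → Γ α x = 1) ∧
        ∀ x, M₁ + 1 ≤ x → Γ α x = Real.exp (-α * (x - M₁))) :
    ∃ α₀ > 0, ∀ α : ℝ, 0 < α → α ≤ α₀ → ∃ M₂ > M₁ + 1, ∀ x, M₂ ≤ x →
      |(∫ y, J (x - y) * Γ α y) - Real.exp (-α * (x - M₁))| ≤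
        α * cmin / 4 * Real.exp (-α * (x - M₁)) := by
  -- exponential moments
  have h1 : Integrable (fun z => J z * Real.exp z) := by
    simpa using hJexp 1 one_pos
  have hneg : Integrable (fun z => J z * Real.exp (-z)) := by
    have h2 := h1.comp_neg
    refine h2.congr (ae_of_all _ fun z => ?_)
    simp [← hJeven z]
  have hKint : Integrable (fun z => J z * (Real.exp z + Real.exp (-z))) := by
    simp only [mul_add]; exact h1.add hneg
  set K : ℝ := ∫ z, J z * (Real.exp z + Real.exp (-z)) with hKdef
  have hK0 : 0 ≤ K := integral_nonneg fun z =>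
    mul_nonneg (hJnn z) (by positivity)
  -- z * J z is integrable with integral 0
  have hzJ : Integrable (fun z => z * J z) := by
    refine hKint.mono' (aestronglyMeasurable_id.mul hJint.1) (ae_of_all _ fun z => ?_)
    have h3 : |z| ≤ Real.exp z + Real.exp (-z) := by
      have := Real.add_one_le_exp |z|
      have := aux_exp_abs z
      linarith
    have h3' : ‖z * J z‖ = |z| * J z := by
      rw [norm_mul, Real.norm_eq_abs, Real.norm_eq_abs, abs_of_nonneg (hJnn z)]
    rw [h3']
    calc |z| * J z ≤ (Real.exp z + Real.exp (-z)) * J z :=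
          mul_le_mul_of_nonneg_right h3 (hJnn z)
      _ = J z * (Real.exp z + Real.exp (-z)) := by ring
  have hzJ0 : (∫ z, z * J z) = 0 := by
    have h5 : (∫ z, -(z * J z)) = ∫ z, z * J z := by
      have h4 := integral_neg_eq_self (fun z => z * J z) (volume : Measure ℝ)
      calc (∫ z, -(z * J z)) = ∫ z, (-z) * J (-z) := by
            congr 1; funext z; rw [← hJeven z]; ring
        _ = ∫ z, z * J z := h4
    rw [integral_neg] at h5
    linarith
  -- choice of α₀
  refine ⟨min (1/2) (cmin / (384 * (K + 1))), lt_min (by norm_num) (by positivity), ?_⟩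
  intro α hα hαle
  have hα2 : α ≤ 1/2 := hαle.trans (min_le_left _ _)
  have hαc : α ≤ cmin / (384 * (K + 1)) := hαle.trans (min_le_right _ _)
  obtain ⟨hΓsm, hΓanti, hΓ01, hΓleft, hΓright⟩ := hΓ α hα
  have hJα : Integrable (fun z => J z * Real.exp (α * z)) := hJexp α hα
  -- bound on g - 1 where g = ∫ J e^{αz}
  set g : ℝ := ∫ z, J z * Real.exp (α * z) with hgdef
  have hkeyg : g - 1 = ∫ z, J z * (Real.exp (α * z) - 1 - α * z) := by
    have i1 : (∫ z, ((J z * Real.exp (α * z) - J z) - α * (z * J z)))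
        = (∫ z, (J z * Real.exp (α * z) - J z)) - ∫ z, α * (z * J z) :=
      integral_sub (hJα.sub hJint) (hzJ.const_mul α)
    have i2 : (∫ z, (J z * Real.exp (α * z) - J z)) = g - 1 := by
      rw [integral_sub hJα hJint, hJ1]
    have i3 : (∫ z, α * (z * J z)) = 0 := by
      rw [integral_const_mul, hzJ0, mul_zero]
    have i4 : (fun z => J z * (Real.exp (α * z) - 1 - α * z)) =
        fun z => (J z * Real.exp (α * z) - J z) - α * (z * J z) := by
      funext z; ring
    rw [i4, i1, i2, i3, sub_zero]
  have hgb : |g - 1| ≤ 48 * α ^ 2 * K := by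
    have h7 : |g - 1| ≤ ∫ z, 48 * α ^ 2 * (J z * (Real.exp z + Real.exp (-z))) := by
      rw [hkeyg, ← Real.norm_eq_abs]
      refine norm_integral_le_of_norm_le (hKint.const_mul _) (ae_of_all _ fun z => ?_)
      have e1 := aux_exp_bound (α * z)
      have e2 : |α * z| = α * |z| := by
        rw [abs_mul, abs_of_pos hα]
      have e3 : Real.exp (α * |z|) ≤ Real.exp (|z| / 2) :=
        Real.exp_le_exp.2 (by nlinarith [abs_nonneg z])
      have e4 : |z| ^ 2 * Real.exp (|z| / 2) ≤ 16 * Real.exp |z| :=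
        aux_sq_exp |z| (abs_nonneg z)
      have e5 := aux_exp_abs z
      have e6 : |Real.exp (α * z) - 1 - α * z| ≤
          48 * α ^ 2 * (Real.exp z + Real.exp (-z)) := by
        have hzz : (α * z) ^ 2 = α ^ 2 * |z| ^ 2 := by rw [sq_abs]; ring
        have e7 : 3 * (α * z) ^ 2 * Real.exp |α * z| ≤
            3 * α ^ 2 * (|z| ^ 2 * Real.exp (|z| / 2)) := by
          rw [e2, hzz]
          have e7' := mul_le_mul_of_nonneg_left e3
            (by positivity : (0:ℝ) ≤ α ^ 2 * |z| ^ 2)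
          nlinarith
        have e8 : 3 * α ^ 2 * (|z| ^ 2 * Real.exp (|z| / 2)) ≤
            3 * α ^ 2 * (16 * Real.exp |z|) :=
          mul_le_mul_of_nonneg_left e4 (by positivity)
        have e9 : 3 * α ^ 2 * (16 * Real.exp |z|) ≤
            48 * α ^ 2 * (Real.exp z + Real.exp (-z)) := by
          nlinarith [sq_nonneg α]
        linarith
      have e10 : ‖J z * (Real.exp (α * z) - 1 - α * z)‖ =
          J z * |Real.exp (α * z) - 1 - α * z| := by
        rw [norm_mul, Real.norm_eq_abs, Real.norm_eq_abs, abs_of_nonneg (hJnn z)]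
      rw [e10]
      calc J z * |Real.exp (α * z) - 1 - α * z|
          ≤ J z * (48 * α ^ 2 * (Real.exp z + Real.exp (-z))) :=
            mul_le_mul_of_nonneg_left e6 (hJnn z)
        _ = 48 * α ^ 2 * (J z * (Real.exp z + Real.exp (-z))) := by ring
    rw [integral_const_mul] at h7
    exact h7
  have hgb2 : |g - 1| ≤ α * cmin / 8 := by
    have hK1 : (0:ℝ) < 384 * (K + 1) := by positivity
    have hc : α * (384 * (K + 1)) ≤ cmin := (le_div_iff₀ hK1).mp hαc
    nlinarith [mul_le_mul_of_nonneg_left hc hα.le, sq_nonneg α]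
  -- tail of J e^{αz}
  have htail : Tendsto (fun R : ℝ => ∫ z in Set.Ici R, J z * Real.exp (α * z))
      atTop (𝓝 0) := by
    have hint : (⋂ R : ℝ, Set.Ici R) = (∅ : Set ℝ) := by
      ext x
      simp only [Set.mem_iInter, Set.mem_Ici, Set.mem_empty_iff_false, iff_false,
        not_forall]
      exact ⟨x + 1, not_le.2 (by linarith)⟩
    have h := tendsto_setIntegral_of_antitone (μ := volume)
      (f := fun z => J z * Real.exp (α * z))
      (s := fun R : ℝ => Set.Ici R) (fun R => measurableSet_Ici)
      (fun a b hab => Set.Ici_subset_Ici.2 hab) ⟨0, hJα.integrableOn⟩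
    rw [hint] at h
    simpa using h
  have hε : 0 < α * cmin / 24 := by positivity
  obtain ⟨R₀, hR₀⟩ := eventually_atTop.1 (htail.eventually (gt_mem_nhds hε))
  refine ⟨max R₀ 0 + M₁ + 2, by nlinarith [le_max_right R₀ (0:ℝ)], ?_⟩
  intro x hx
  set E : ℝ := Real.exp (-α * (x - M₁)) with hEdef
  have hE : 0 < E := Real.exp_pos _
  -- integrabilities
  have hGcomp : Integrable (fun y => (fun z => J z * Real.exp (α * z)) (x - y)) :=
    hJα.comp_sub_left x
  have hheq : ∀ y, J (x - y) * Real.exp (-α * (y - M₁)) =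
      E * (J (x - y) * Real.exp (α * (x - y))) := by
    intro y
    rw [hEdef, mul_comm (Real.exp _), mul_assoc, ← Real.exp_add]
    ring_nf
  have hInth : Integrable (fun y => J (x - y) * Real.exp (-α * (y - M₁))) := by
    refine (hGcomp.const_mul E).congr (ae_of_all _ fun y => ?_)
    exact (hheq y).symm
  have hJcomp : Integrable (fun y => J (x - y)) := hJint.comp_sub_left x
  have hIntf : Integrable (fun y => J (x - y) * Γ α y) := by
    refine hJcomp.mono' (hJcomp.1.mul hΓsm.continuous.aestronglyMeasurable)
      (ae_of_all _ fun y => ?_)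
    have h01 := hΓ01 y
    have hne : ‖J (x - y) * Γ α y‖ = J (x - y) * |Γ α y| := by
      rw [norm_mul, Real.norm_eq_abs, Real.norm_eq_abs, abs_of_nonneg (hJnn _)]
    rw [hne, abs_of_nonneg h01.1]
    nlinarith [hJnn (x - y), h01.2]
  -- ∫ h = E * g
  have hInteq : (∫ y, J (x - y) * Real.exp (-α * (y - M₁))) = E * g := by
    calc (∫ y, J (x - y) * Real.exp (-α * (y - M₁)))
        = ∫ y, E * (J (x - y) * Real.exp (α * (x - y))) := by
          congr 1; funext y; exact hheq y
      _ = E * ∫ y, (fun z => J z * Real.exp (α * z)) (x - y) := integral_const_mul _ _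
      _ = E * g := by
          rw [integral_sub_left_eq_self (fun z => J z * Real.exp (α * z)) volume x]
  -- the difference term
  set T : ℝ := ∫ z in Set.Ici (x - M₁ - 1), J z * Real.exp (α * z) with hTdef
  have hTε : T < α * cmin / 24 := by
    refine hR₀ (x - M₁ - 1) ?_
    have := le_max_left R₀ (0:ℝ)
    linarith
  have hA : |(∫ y, J (x - y) * Γ α y) - ∫ y, J (x - y) * Real.exp (-α * (y - M₁))| ≤
      3 * (E * T) := by
    rw [← integral_sub hIntf hInth, ← Real.norm_eq_abs]
    have hψ : (fun y => Set.indicator (Set.Iic (M₁ + 1))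
          (fun y => 3 * (J (x - y) * Real.exp (-α * (y - M₁)))) y) =
        (fun y => Set.indicator (Set.Ici (x - M₁ - 1))
          (fun z => 3 * (E * (J z * Real.exp (α * z)))) (x - y)) := by
      funext y
      simp only [Set.indicator_apply, Set.mem_Iic, Set.mem_Ici]
      by_cases hy : y ≤ M₁ + 1
      · rw [if_pos hy, if_pos (by linarith : x - M₁ - 1 ≤ x - y), hheq y]
      · rw [if_neg hy, if_neg (fun h => hy (by linarith))]
    have hbint : Integrable (fun y => Set.indicator (Set.Iic (M₁ + 1))
        (fun y => 3 * (J (x - y) * Real.exp (-α * (y - M₁)))) y) :=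
      (hInth.const_mul 3).indicator measurableSet_Iic
    have hbnd : ∀ y, ‖J (x - y) * Γ α y - J (x - y) * Real.exp (-α * (y - M₁))‖ ≤
        Set.indicator (Set.Iic (M₁ + 1))
          (fun y => 3 * (J (x - y) * Real.exp (-α * (y - M₁)))) y := by
      intro y
      by_cases hy : y ≤ M₁ + 1
      · rw [Set.indicator_of_mem (Set.mem_Iic.2 hy)]
        have h01 := hΓ01 y
        have hexp : (1:ℝ)/2 ≤ Real.exp (-α * (y - M₁)) := by
          have hh0 := Real.exp_pos (1/2 : ℝ)
          have hh1 : Real.exp (1/2 : ℝ) * Real.exp (1/2 : ℝ) = Real.exp 1 := by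
            rw [← Real.exp_add]; norm_num
          have hh2 : Real.exp (1/2 : ℝ) ≤ 2 := by
            nlinarith [Real.exp_one_lt_d9]
          have hh3 : (1:ℝ)/2 ≤ Real.exp (-(1/2) : ℝ) := by
            rw [Real.exp_neg]
            have hv : (0:ℝ) < (Real.exp (1/2 : ℝ))⁻¹ := by positivity
            have hinv : Real.exp (1/2 : ℝ) * (Real.exp (1/2 : ℝ))⁻¹ = 1 :=
              mul_inv_cancel₀ (ne_of_gt hh0)
            nlinarith [mul_le_mul_of_nonneg_right hh2 hv.le]
          have hh4 : -(1/2 : ℝ) ≤ -α * (y - M₁) := by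
            have := mul_le_mul_of_nonneg_left (by linarith : y - M₁ ≤ 1) hα.le
            nlinarith
          exact le_trans hh3 (Real.exp_le_exp.2 hh4)
        have habs : |Γ α y - Real.exp (-α * (y - M₁))| ≤
            3 * Real.exp (-α * (y - M₁)) := by
          rw [abs_le]
          constructor <;> nlinarith [h01.1, h01.2, Real.exp_pos (-α * (y - M₁))]
        have hnorm : ‖J (x - y) * Γ α y - J (x - y) * Real.exp (-α * (y - M₁))‖ =
            J (x - y) * |Γ α y - Real.exp (-α * (y - M₁))| := by
          rw [← mul_sub, norm_mul, Real.norm_eq_abs, Real.norm_eq_abs,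
            abs_of_nonneg (hJnn _)]
        rw [hnorm]
        calc J (x - y) * |Γ α y - Real.exp (-α * (y - M₁))|
            ≤ J (x - y) * (3 * Real.exp (-α * (y - M₁))) :=
              mul_le_mul_of_nonneg_left habs (hJnn _)
          _ = 3 * (J (x - y) * Real.exp (-α * (y - M₁))) := by ring
      · rw [Set.indicator_of_notMem (by simp only [Set.mem_Iic]; exact hy)]
        rw [hΓright y (by linarith)]
        simp
    refine (norm_integral_le_of_norm_le hbint (ae_of_all _ hbnd)).trans ?_
    rw [hψ,
      integral_sub_left_eq_self (Set.indicator (Set.Ici (x - M₁ - 1))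
        (fun z => 3 * (E * (J z * Real.exp (α * z))))) volume x,
      integral_indicator measurableSet_Ici]
    rw [show (fun z => 3 * (E * (J z * Real.exp (α * z)))) =
        fun z => (3 * E) * (J z * Real.exp (α * z)) from funext fun z => by ring]
    rw [integral_const_mul, ← hTdef]
    nlinarith [hE.le]
  -- final assembly
  have hfinal : (∫ y, J (x - y) * Γ α y) - E =
      ((∫ y, J (x - y) * Γ α y) - ∫ y, J (x - y) * Real.exp (-α * (y - M₁))) +
        E * (g - 1) := by
    rw [hInteq]; ring
  rw [hfinal]
  have h9 : |E * (g - 1)| = E * |g - 1| := by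
    rw [abs_mul, abs_of_pos hE]
  have h10 : E * |g - 1| ≤ E * (α * cmin / 8) :=
    mul_le_mul_of_nonneg_left hgb2 hE.le
  have h11 : 3 * (E * T) ≤ 3 * (E * (α * cmin / 24)) := by
    nlinarith [mul_le_mul_of_nonneg_left hTε.le hE.le]
  calc |((∫ y, J (x - y) * Γ α y) - ∫ y, J (x - y) * Real.exp (-α * (y - M₁))) +
      E * (g - 1)|
      ≤ |(∫ y, J (x - y) * Γ α y) - ∫ y, J (x - y) * Real.exp (-α * (y - M₁))| +
        |E * (g - 1)| := abs_add_le _ _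
    _ ≤ 3 * (E * (α * cmin / 24)) + E * (α * cmin / 8) := by
        rw [h9]; exact add_le_add (hA.trans h11) h10
    _ = α * cmin / 4 * E := by ring
end

section
/- Let J be a nonnegative even probability density with finite exponential moments, let c_min > 0, C̃ > 0, h̃ ∈ ℝ, and let X : [s, ∞) → ℝ be C¹ with Ẋ(t) ≥ c_min for all t. Choose c̃ > 0 such that c̃·c_min − ∫_ℝ J(y) e^{c̃ y} dy + 1 > 0. Then the function w(t, x) = −C̃ e^{−c̃(x − X(t) − h̃)} satisfies the differential inequality w_t − (J ∗ w(t,·) − w) ≤ 0 for all t ≥ s and x ∈ ℝ. -/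
/-!
With `E = e^{-c̃(x - X(t) - h̃)}`, the substitution `y ↦ x - y` turns the convolution of `J` with
the exponential into `E ∫ J(y) e^{c̃ y} dy`, so
`w_t - (J ∗ w - w) = -C̃ E (c̃ Ẋ(t) - ∫ J(y) e^{c̃ y} dy + 1)`,
and `Ẋ ≥ c_min`, `c̃ > 0` bound the bracket below by the positive `c̃ c_min - ∫ J e^{c̃ ·} + 1`.
-/

open Real MeasureTheory Filter

theorem hasDerivAt_exp_neg_mul_sub_sub {X : ℝ → ℝ} {v c x h t : ℝ}
    (hX : HasDerivAt X v t) :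
    HasDerivAt (fun τ => exp (-c * (x - X τ - h))) (exp (-c * (x - X t - h)) * (c * v)) t := by
  have hexponent : HasDerivAt (fun τ => -c * (x - X τ - h)) (c * v) t :=
    (((hX.const_sub x).sub_const h).const_mul (-c)).congr_deriv (by ring)
  exact hexponent.exp

/-- No integrability is needed: when `y ↦ J y * exp (c * y)` is not integrable,
both sides are the junk value `0`. -/
theorem integral_mul_const_mul_exp_neg_mul_sub (J : ℝ → ℝ) (A c x a : ℝ) :
    ∫ y, J (x - y) * (A * exp (-c * (y - a))) =
      A * exp (-c * (x - a)) * ∫ y, J y * exp (c * y) := by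
  rw [← integral_sub_left_eq_self (fun y => J (x - y) * (A * exp (-c * (y - a)))) volume x,
    ← integral_const_mul]
  congr 1 with y
  rw [sub_sub_cancel, show -c * (x - y - a) = -c * (x - a) + c * y by ring, exp_add]
  ring

theorem stmt15_general (s cmin Ct ht ct : ℝ) (J : ℝ → ℝ) (X X' : ℝ → ℝ)
    (hCt : 0 < Ct) (hct : 0 < ct)
    (hg : 0 < ct * cmin - (∫ y, J y * Real.exp (ct * y)) + 1)
    (hX : ∀ t, HasDerivAt X (X' t) t) (hX' : ∀ t, cmin ≤ X' t) :
    ∀ t, s ≤ t → ∀ x : ℝ,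
      deriv (fun τ => -Ct * Real.exp (-ct * (x - X τ - ht))) t -
        ((∫ y, J (x - y) * (-Ct * Real.exp (-ct * (y - X t - ht)))) -
          (-Ct * Real.exp (-ct * (x - X t - ht)))) ≤ 0 := by
  intro t _ x
  rw [((hasDerivAt_exp_neg_mul_sub_sub (hX t)).const_mul (-Ct)).deriv]
  simp only [sub_sub]
  rw [integral_mul_const_mul_exp_neg_mul_sub]
  have hbracket : 0 < ct * X' t - (∫ y, J y * exp (ct * y)) + 1 := by
    linarith [mul_le_mul_of_nonneg_left (hX' t) hct.le]
  nlinarith [mul_pos (mul_pos hCt (exp_pos (-ct * (x - (X t + ht))))) hbracket]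

theorem stmt15 (s cmin Ct ht ct : ℝ) (J : ℝ → ℝ) (X X' : ℝ → ℝ)
    (hcmin : 0 < cmin) (hCt : 0 < Ct) (hct : 0 < ct)
    (hg : 0 < ct * cmin - (∫ y, J y * Real.exp (ct * y)) + 1)
    (hJnn : ∀ x, 0 ≤ J x) (hJeven : ∀ x, J x = J (-x))
    (hJint : Integrable J) (hJ1 : (∫ x, J x) = 1)
    (hJexp : ∀ l : ℝ, 0 < l → Integrable (fun x => J x * Real.exp (l * x)))
    (hX : ∀ t, HasDerivAt X (X' t) t) (hX' : ∀ t, cmin ≤ X' t)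
    (hX'c : Continuous X') :
    ∀ t, s ≤ t → ∀ x : ℝ,
      deriv (fun τ => -Ct * Real.exp (-ct * (x - X τ - ht))) t -
        ((∫ y, J (x - y) * (-Ct * Real.exp (-ct * (y - X t - ht)))) -
          (-Ct * Real.exp (-ct * (x - X t - ht)))) ≤ 0 :=
  stmt15_general s cmin Ct ht ct J X X' hCt hct hg hX hX'
end
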